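/- For all integers m, n ≥ 4, the Neighbourhood Zagreb index of the grid graph P_n × P_m equals 256mn − 374m − 374n + 472. -/

import Mathlib

open Finset
open scoped Classical

/-- Sum of degrees of the neighbours of a vertex: `δ_G(v) = ∑_{u ∈ N_G(v)} deg_G(u)`. -/
noncomputable def neighborDegSum {V : Type*} [Fintype V] (G : SimpleGraph V) (v : V) : ℕ :=
  ∑ u ∈ G.neighborFinset v, G.degree u

/-- The Neighbourhood Zagreb index `M_N(G) = ∑_{v ∈ V(G)} δ_G(v)²`. -/
noncomputable def neighborhoodZagreb {V : Type*} [Fintype V] (G : SimpleGraph V) : ℕ :=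
  ∑ v, (neighborDegSum G v) ^ 2

/-! In `G □ H` the neighbours of `(x, y)` are the `(u, y)` with `u ~ x` and the `(x, w)` with
`w ~ y`, and degrees add, so `δ(x, y) = δ_G(x) + δ_H(y) + 2 d_G(x) d_H(y)`. Squaring and
summing expresses `M_N(G □ H)` through a few vertex sums of `G` and of `H` (using
`∑ δ = ∑ d² = M₁`). In the path `P_n`, `n ≥ 4`, the degree and `δ` of a vertex depend only
on whether it is an end, next to an end, or interior, so each of these sums is linear in `n`. -/

namespace SimpleGraph

variable {α β : Type*} [Fintype α] [Fintype β]

noncomputable def firstZagreb (G : SimpleGraph α) : ℕ :=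
  ∑ v, G.degree v ^ 2

theorem sum_neighborDegSum (G : SimpleGraph α) :
    ∑ v, neighborDegSum G v = firstZagreb G := by
  simp only [neighborDegSum, firstZagreb, neighborFinset_eq_filter, sum_filter]
  rw [sum_comm]
  refine sum_congr rfl fun u _ => ?_
  rw [← sum_filter, sum_const, smul_eq_mul, sq]
  simp [degree, neighborFinset_eq_filter, adj_comm]

theorem neighborDegSum_boxProd (G : SimpleGraph α) (H : SimpleGraph β) (x : α) (y : β) :
    neighborDegSum (G □ H) (x, y) =
      neighborDegSum G x + neighborDegSum H y + 2 * G.degree x * H.degree y := by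
  have hdeg : ∀ (a : α) (b : β) [Fintype ((G □ H).neighborSet (a, b))],
      (G □ H).degree (a, b) = G.degree a + H.degree b := fun a b _ => degree_boxProd (a, b)
  calc neighborDegSum (G □ H) (x, y)
      = ∑ u ∈ G.neighborFinset x, (G.degree u + H.degree y)
          + ∑ w ∈ H.neighborFinset y, (G.degree x + H.degree w) := by
        rw [neighborDegSum, neighborFinset_boxProd, sum_disjUnion]
        simp only [sum_product, sum_singleton, hdeg]
    _ = _ := by
        simp only [sum_add_distrib, sum_const, card_neighborFinset_eq_degree, smul_eq_mul,
          neighborDegSum]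
        ring

theorem neighborhoodZagreb_boxProd (G : SimpleGraph α) (H : SimpleGraph β) :
    neighborhoodZagreb (G □ H) =
      Fintype.card β * neighborhoodZagreb G + Fintype.card α * neighborhoodZagreb H
        + 6 * firstZagreb G * firstZagreb H
        + 4 * (∑ x, G.degree x * neighborDegSum G x) * ∑ y, H.degree y
        + 4 * (∑ x, G.degree x) * ∑ y, H.degree y * neighborDegSum H y := by
  have hexpand : ∀ x y,
      (neighborDegSum G x + neighborDegSum H y + 2 * G.degree x * H.degree y) ^ 2 =
        neighborDegSum G x ^ 2 + neighborDegSum H y ^ 2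
          + 4 * (G.degree x ^ 2 * H.degree y ^ 2) + 2 * (neighborDegSum G x * neighborDegSum H y)
          + 4 * (G.degree x * neighborDegSum G x * H.degree y)
          + 4 * (G.degree x * (H.degree y * neighborDegSum H y)) :=
    fun x y => by ring
  simp only [neighborhoodZagreb, Fintype.sum_prod_type, neighborDegSum_boxProd, hexpand,
    sum_add_distrib, ← mul_sum, ← sum_mul, sum_const, card_univ, smul_eq_mul,
    sum_neighborDegSum]
  unfold firstZagreb
  ring

/-- Takes the value `a` at the ends of `P_n`, `b` next to them and `c` elsewhere; these are
four distinct vertices only when `4 ≤ n`. -/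
def pathProfile (n : ℕ) (a b c : ℤ) (k : ℕ) : ℤ :=
  if k = 0 ∨ k = n - 1 then a else if k = 1 ∨ k = n - 2 then b else c

theorem pathProfile_mul (n : ℕ) (a b c a' b' c' : ℤ) (k : ℕ) :
    pathProfile n a b c k * pathProfile n a' b' c' k =
      pathProfile n (a * a') (b * b') (c * c') k := by
  unfold pathProfile
  split_ifs <;> rfl

theorem sum_pathProfile {n : ℕ} (hn : 4 ≤ n) (a b c : ℤ) :
    ∑ i : Fin n, pathProfile n a b c i = 2 * a + 2 * b + (n - 4) * c := by
  obtain ⟨k, rfl⟩ := Nat.exists_eq_add_of_le' hn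
  obtain ⟨h0, h1, h2, h3⟩ :
      pathProfile (k + 4) a b c 0 = a ∧ pathProfile (k + 4) a b c 1 = b ∧
        pathProfile (k + 4) a b c (k + 2) = b ∧ pathProfile (k + 4) a b c (k + 3) = a := by
    simp [pathProfile]
  have hinner : ∀ i ∈ range k, pathProfile (k + 4) a b c (i + 1 + 1) = c := fun i hi => by
    rw [mem_range] at hi
    unfold pathProfile
    rw [if_neg (by omega), if_neg (by omega)]
  rw [Fin.sum_univ_eq_sum_range (pathProfile (k + 4) a b c), sum_range_succ, sum_range_succ,
    sum_range_succ', sum_range_succ', sum_congr rfl hinner, zero_add, h0, h1, h2, h3, sum_const,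
    card_range, nsmul_eq_mul]
  push_cast
  ring

theorem sum_neighborFinset_pathGraph {M : Type*} [AddCommMonoid M] {n : ℕ} (g : ℕ → M)
    (i : Fin n) :
    ∑ j ∈ (pathGraph n).neighborFinset i, g j =
      (if (i : ℕ) + 1 < n then g (i + 1) else 0) + (if (i : ℕ) = 0 then 0 else g (i - 1)) := by
  rw [neighborFinset_eq_filter, sum_filter]
  simp_rw [pathGraph_adj]
  rw [Fin.sum_univ_eq_sum_range (fun j => if (i : ℕ) + 1 = j ∨ j + 1 = i then g j else 0)]
  have hsplit : ∀ j : ℕ, (if (i : ℕ) + 1 = j ∨ j + 1 = i then g j else 0) =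
      (if (i : ℕ) + 1 = j then g j else 0) + (if j + 1 = i then g j else 0) := fun j => by
    split_ifs <;> first | omega | simp
  rw [sum_congr rfl fun j _ => hsplit j, sum_add_distrib, sum_ite_eq]
  simp only [mem_range]
  congr 1
  obtain ⟨_ | p, hp⟩ := i
  · simp
  · simp [sum_ite_eq', (by omega : p < n)]

theorem degree_pathGraph {n : ℕ} (hn : 2 ≤ n) (i : Fin n) :
    ((pathGraph n).degree i : ℤ) = pathProfile n 1 2 2 i := by
  rw [← card_neighborFinset_eq_degree, card_eq_sum_ones, Nat.cast_sum,
    sum_neighborFinset_pathGraph (fun _ => ((1 : ℕ) : ℤ))]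
  unfold pathProfile
  split_ifs <;> omega

theorem neighborDegSum_pathGraph {n : ℕ} (hn : 4 ≤ n) (i : Fin n) :
    (neighborDegSum (pathGraph n) i : ℤ) = pathProfile n 2 3 4 i := by
  rw [neighborDegSum, Nat.cast_sum, sum_congr rfl fun j _ => degree_pathGraph (by omega) j,
    sum_neighborFinset_pathGraph (pathProfile n 1 2 2)]
  have hi := i.isLt
  simp only [pathProfile, Nat.add_one_ne_zero, false_or]
  split_ifs <;> omega

theorem neighborhoodZagreb_pathGraph {n : ℕ} (hn : 4 ≤ n) :
    (neighborhoodZagreb (pathGraph n) : ℤ) = 16 * n - 38 := by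
  simp only [neighborhoodZagreb, Nat.cast_sum, Nat.cast_mul, neighborDegSum_pathGraph hn, sq,
    pathProfile_mul, sum_pathProfile hn]
  ring

theorem firstZagreb_pathGraph {n : ℕ} (hn : 4 ≤ n) :
    (firstZagreb (pathGraph n) : ℤ) = 4 * n - 6 := by
  simp only [firstZagreb, Nat.cast_sum, Nat.cast_mul, degree_pathGraph (by omega : 2 ≤ n), sq,
    pathProfile_mul, sum_pathProfile hn]
  ring

theorem sum_degree_pathGraph {n : ℕ} (hn : 4 ≤ n) :
    ∑ i, ((pathGraph n).degree i : ℤ) = 2 * n - 2 := by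
  simp only [degree_pathGraph (by omega : 2 ≤ n), sum_pathProfile hn]
  ring

theorem sum_degree_mul_neighborDegSum_pathGraph {n : ℕ} (hn : 4 ≤ n) :
    ∑ i, ((pathGraph n).degree i * neighborDegSum (pathGraph n) i : ℤ) = 8 * n - 16 := by
  simp only [degree_pathGraph (by omega : 2 ≤ n), neighborDegSum_pathGraph hn, pathProfile_mul,
    sum_pathProfile hn]
  ring

end SimpleGraph

open SimpleGraph

theorem neighborhoodZagreb_grid (m n : ℕ) (hm : 4 ≤ m) (hn : 4 ≤ n) :
    (neighborhoodZagreb (SimpleGraph.pathGraph n □ SimpleGraph.pathGraph m) : ℤ) =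
      256 * m * n - 374 * m - 374 * n + 472 := by
  rw [neighborhoodZagreb_boxProd]
  push_cast
  rw [neighborhoodZagreb_pathGraph hn, neighborhoodZagreb_pathGraph hm, firstZagreb_pathGraph hn,
    firstZagreb_pathGraph hm, sum_degree_pathGraph hn, sum_degree_pathGraph hm,
    sum_degree_mul_neighborDegSum_pathGraph hn, sum_degree_mul_neighborDegSum_pathGraph hm,
    Fintype.card_fin, Fintype.card_fin]
  ring
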